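/- Let H be a finite-dimensional complex inner product space, let d_1, …, d_m ∈ H be linearly independent, let N be an orthogonal projection on H, let φ_{as} ∈ H (1 ≤ a ≤ m, 1 ≤ s ≤ r), fix k ∈ {1,…,m}, and let σ be a linear operator on H. Then the identity ∑_{a,b=1}^m ∑_{s=1}^r ⟨N φ_{as}, B N φ_{bs}⟩ |d_a⟩⟨d_b| = tr(B σ) |d_k⟩⟨d_k| holds for every linear operator B on H if and only if ∑_{s=1}^r |N φ_{bs}⟩⟨N φ_{as}| = δ_{ak} δ_{bk} σ for all 1 ≤ a, b ≤ m. -/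

import Mathlib

/-!
Put `T a b = ∑ s, |N φ b s⟩⟨N φ a s|`. The coefficient of `|d a⟩⟨d b|` on the left is
`tr (B T_ab)`, and the right-hand side is `∑ a b, tr (B S_ab) |d a⟩⟨d b|` with
`S_ab = δ_ak δ_bk σ`. Since the `|d a⟩⟨d b|` are linearly independent, the identity for all `B`
says `tr (B T_ab) = tr (B S_ab)` for all `B`, and the trace pairing is nondegenerate
(test against `B = |u⟩⟨v|`), so this is `T_ab = S_ab`.
-/

/-- The rank-one operator `|u⟩⟨v| : ψ ↦ ⟨v, ψ⟩ u` (inner product conjugate-linear in the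
first argument, linear in the second). -/
noncomputable def rankOne {H : Type*} [NormedAddCommGroup H] [InnerProductSpace ℂ H]
    (u v : H) : H →ₗ[ℂ] H where
  toFun ψ := (inner ℂ v ψ : ℂ) • u
  map_add' x y := by simp [inner_add_right, add_smul]
  map_smul' c x := by simp [inner_smul_right, smul_smul]

section RankOne

variable {H : Type*} [NormedAddCommGroup H] [InnerProductSpace ℂ H]

@[simp] lemma rankOne_apply (u v ψ : H) : rankOne u v ψ = (inner ℂ v ψ : ℂ) • u := rfl

lemma rankOne_eq_toLinearMap (u v : H) :
    rankOne u v = (InnerProductSpace.rankOne ℂ u v : H →ₗ[ℂ] H) := rfl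

lemma comp_rankOne (B : H →ₗ[ℂ] H) (u v : H) : B ∘ₗ rankOne u v = rankOne (B u) v := by
  ext ψ; simp

lemma rankOne_sum_smul_right {ι : Type*} (u : H) (s : Finset ι) (c : ι → ℂ) (v : ι → H) :
    rankOne u (∑ i ∈ s, starRingEnd ℂ (c i) • v i) = ∑ i ∈ s, c i • rankOne u (v i) := by
  ext ψ; simp [Finset.sum_smul, smul_smul, mul_comm]

variable [FiniteDimensional ℂ H]

lemma trace_comp_rankOne (B : H →ₗ[ℂ] H) (u v : H) :
    LinearMap.trace ℂ H (B ∘ₗ rankOne u v) = inner ℂ v (B u) := by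
  rw [comp_rankOne, rankOne_eq_toLinearMap, InnerProductSpace.trace_rankOne]

lemma trace_rankOne_comp (T : H →ₗ[ℂ] H) (u v : H) :
    LinearMap.trace ℂ H (rankOne u v ∘ₗ T) = inner ℂ v (T u) := by
  rw [LinearMap.trace_comp_comm', trace_comp_rankOne]

lemma trace_comp_sum_rankOne {ι : Type*} (B : H →ₗ[ℂ] H) (s : Finset ι)
    (u v : ι → H) :
    LinearMap.trace ℂ H (B ∘ₗ ∑ i ∈ s, rankOne (u i) (v i)) =
      ∑ i ∈ s, inner ℂ (v i) (B (u i)) := by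
  simp_rw [← Module.End.mul_eq_comp, Finset.mul_sum, map_sum, Module.End.mul_eq_comp,
    trace_comp_rankOne]

lemma LinearMap.eq_of_forall_trace_comp_eq {T S : H →ₗ[ℂ] H}
    (h : ∀ B : H →ₗ[ℂ] H, trace ℂ H (B ∘ₗ T) = trace ℂ H (B ∘ₗ S)) : T = S := by
  ext u
  refine ext_inner_left ℂ fun v => ?_
  simpa only [trace_rankOne_comp] using h (rankOne u v)

end RankOne

section LinearIndependent

variable {H ι : Type*} [NormedAddCommGroup H] [InnerProductSpace ℂ H] [Fintype ι] {d : ι → H}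

lemma LinearIndependent.eq_zero_of_sum_rankOne_eq_zero (hd : LinearIndependent ℂ d)
    {w : ι → H} (h : ∑ a, rankOne (d a) (w a) = 0) (a : ι) : w a = 0 := by
  refine ext_inner_right ℂ fun ψ => ?_
  have hψ : ∑ a, (inner ℂ (w a) ψ : ℂ) • d a = 0 := by
    simpa using LinearMap.congr_fun h ψ
  simpa using Fintype.linearIndependent_iff.mp hd _ hψ a

lemma linearIndependent_rankOne (hd : LinearIndependent ℂ d) :
    LinearIndependent ℂ fun p : ι × ι => rankOne (d p.1) (d p.2) := by
  refine Fintype.linearIndependent_iff.mpr fun c hc ⟨a, b⟩ => ?_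
  rw [Fintype.sum_prod_type] at hc
  simp_rw [← rankOne_sum_smul_right] at hc
  simpa using Fintype.linearIndependent_iff.mp hd _ (hd.eq_zero_of_sum_rankOne_eq_zero hc a) b

lemma LinearIndependent.sum_smul_rankOne_inj (hd : LinearIndependent ℂ d) {c c' : ι → ι → ℂ} :
    ∑ a, ∑ b, c a b • rankOne (d a) (d b) = ∑ a, ∑ b, c' a b • rankOne (d a) (d b) ↔
      ∀ a b, c a b = c' a b := by
  simp_rw [← Fintype.sum_prod_type' (f := fun a b => c a b • rankOne (d a) (d b)),
    ← Fintype.sum_prod_type' (f := fun a b => c' a b • rankOne (d a) (d b))]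
  exact ⟨fun h a b => Fintype.linearIndependent_iffₛ.mp (linearIndependent_rankOne hd) _ _ h (a, b),
    fun h => by simp only [h]⟩

end LinearIndependent

theorem stmt_14_general {H : Type*} [NormedAddCommGroup H] [InnerProductSpace ℂ H]
    [FiniteDimensional ℂ H] (m r : ℕ) (d : Fin m → H)
    (hd : LinearIndependent ℂ d)
    (N : H →ₗ[ℂ] H)
    (φ : Fin m → Fin r → H) (k : Fin m) (σ : H →ₗ[ℂ] H) :
    (∀ B : H →ₗ[ℂ] H,
      ∑ a : Fin m, ∑ b : Fin m, ∑ s : Fin r,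
          (inner ℂ (N (φ a s)) (B (N (φ b s))) : ℂ) • rankOne (d a) (d b)
        = (LinearMap.trace ℂ H (B ∘ₗ σ)) • rankOne (d k) (d k))
    ↔ (∀ a b : Fin m,
        ∑ s : Fin r, rankOne (N (φ b s)) (N (φ a s))
          = if a = k ∧ b = k then σ else 0) := by
  classical
  have hσ (B : H →ₗ[ℂ] H) : LinearMap.trace ℂ H (B ∘ₗ σ) • rankOne (d k) (d k) =
      ∑ a, ∑ b,
        LinearMap.trace ℂ H (B ∘ₗ if a = k ∧ b = k then σ else 0) • rankOne (d a) (d b) := by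
    simp [apply_ite, ite_and]
  simp_rw [← Finset.sum_smul, ← trace_comp_sum_rankOne, hσ, hd.sum_smul_rankOne_inj]
  exact ⟨fun h a b => LinearMap.eq_of_forall_trace_comp_eq fun B => h B a b,
    fun h B a b => by rw [h]⟩

/-- for linearly independent `d_1, …, d_m`, an orthogonal projection `N`,
Kraus vectors `φ_{as}`, a fixed `k`, and an operator `σ`, the identity
`∑_{a,b,s} ⟨Nφ_{as}, B Nφ_{bs}⟩ |d_a⟩⟨d_b| = tr(Bσ) |d_k⟩⟨d_k|` holds for all `B` iff
`∑_s |Nφ_{bs}⟩⟨Nφ_{as}| = δ_{ak} δ_{bk} σ` for all `a, b`. -/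
theorem stmt_14 {H : Type*} [NormedAddCommGroup H] [InnerProductSpace ℂ H]
    [FiniteDimensional ℂ H] (m r : ℕ) (d : Fin m → H)
    (hd : LinearIndependent ℂ d)
    (N : H →ₗ[ℂ] H) (hNproj : N ∘ₗ N = N) (hNsym : N.IsSymmetric)
    (φ : Fin m → Fin r → H) (k : Fin m) (σ : H →ₗ[ℂ] H) :
    (∀ B : H →ₗ[ℂ] H,
      ∑ a : Fin m, ∑ b : Fin m, ∑ s : Fin r,
          (inner ℂ (N (φ a s)) (B (N (φ b s))) : ℂ) • rankOne (d a) (d b)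
        = (LinearMap.trace ℂ H (B ∘ₗ σ)) • rankOne (d k) (d k))
    ↔ (∀ a b : Fin m,
        ∑ s : Fin r, rankOne (N (φ b s)) (N (φ a s))
          = if a = k ∧ b = k then σ else 0) :=
  stmt_14_general m r d hd N φ k σ
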